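/- arXiv:2405.10402 — 2 statements merged into one kernel-verified Lean document; each statement's English description precedes it below -/
import Mathlib

section
/- Let J be an invertible real 3×3 matrix, let b ∈ ℝ³, let ψ : ℝ³ → ℝ³ be differentiable at ξ ∈ ℝ³, and define φ : ℝ³ → ℝ³ by φ(x) = (det J)⁻¹ · J ψ(J⁻¹(x − b)) (the contravariant Piola transform of ψ under the affine map x = Jξ + b). Then φ is differentiable at x = Jξ + b and div φ(x) = (det J)⁻¹ · div ψ(ξ), where the divergence is the trace of the (Fréchet) derivative; i.e. the divergence of a vector field mapped by the contravariant Piola transformation under an affine map scales by (det J)⁻¹. -/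
open Matrix

/-- The divergence (trace of the Fréchet derivative) of a vector field mapped by the
contravariant Piola transformation under the affine map `x = Jξ + b`, i.e.
`φ(x) = (det J)⁻¹ • J ψ(J⁻¹(x − b))`, satisfies `div φ(Jξ + b) = (det J)⁻¹ div ψ(ξ)`,
and `φ` is differentiable at `Jξ + b`. -/
theorem contravariant_piola_divergence
    (J : Matrix (Fin 3) (Fin 3) ℝ) (hJ : IsUnit J.det) (b : Fin 3 → ℝ)
    (ψ φ : (Fin 3 → ℝ) → (Fin 3 → ℝ)) (ξ : Fin 3 → ℝ)
    (hψ : DifferentiableAt ℝ ψ ξ)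
    (hφ : ∀ x, φ x = (J.det)⁻¹ • J.mulVec (ψ (J⁻¹.mulVec (x - b)))) :
    DifferentiableAt ℝ φ (J.mulVec ξ + b) ∧
      LinearMap.trace ℝ (Fin 3 → ℝ)
          ((fderiv ℝ φ (J.mulVec ξ + b)) : (Fin 3 → ℝ) →ₗ[ℝ] (Fin 3 → ℝ))
        = (J.det)⁻¹ *
          LinearMap.trace ℝ (Fin 3 → ℝ) ((fderiv ℝ ψ ξ) : (Fin 3 → ℝ) →ₗ[ℝ] (Fin 3 → ℝ)) := by
  set x₀ := J.mulVec ξ + b with hx₀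
  set c := (J.det)⁻¹
  set A : (Fin 3 → ℝ) →L[ℝ] (Fin 3 → ℝ) := LinearMap.toContinuousLinearMap J.mulVecLin
  set B : (Fin 3 → ℝ) →L[ℝ] (Fin 3 → ℝ) := LinearMap.toContinuousLinearMap J⁻¹.mulVecLin
  have hg : HasFDerivAt (fun x => J⁻¹.mulVec (x - b)) B x₀ := by
    have h1 : HasFDerivAt (fun x : Fin 3 → ℝ => x - b) (ContinuousLinearMap.id ℝ _) x₀ :=
      (hasFDerivAt_id x₀).sub_const b
    have h2 := B.hasFDerivAt (x := x₀ - b)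
    exact h2.comp x₀ h1
  have hgx : J⁻¹.mulVec (x₀ - b) = ξ := by
    simp [hx₀, Matrix.mulVec_mulVec, Matrix.nonsing_inv_mul J hJ]
  set D : (Fin 3 → ℝ) →L[ℝ] (Fin 3 → ℝ) := fderiv ℝ ψ ξ
  have hψ' : HasFDerivAt ψ D ξ := hψ.hasFDerivAt
  have hψ'' : HasFDerivAt ψ D (J⁻¹.mulVec (x₀ - b)) := by rw [hgx]; exact hψ'
  have hcomp : HasFDerivAt (fun x => ψ (J⁻¹.mulVec (x - b))) (D.comp B) x₀ :=
    hψ''.comp x₀ hg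
  have hφ' : HasFDerivAt φ (c • (A.comp (D.comp B))) x₀ := by
    have h3 : HasFDerivAt (fun x => c • J.mulVec (ψ (J⁻¹.mulVec (x - b))))
        (c • (A.comp (D.comp B))) x₀ := by
      have := (A.hasFDerivAt.comp x₀ hcomp).const_smul c
      simpa [A] using this
    exact h3.congr_of_eventuallyEq (Filter.Eventually.of_forall fun x => (hφ x))
  refine ⟨hφ'.differentiableAt, ?_⟩
  rw [hφ'.fderiv]
  have : ((c • A.comp (D.comp B) : (Fin 3 → ℝ) →L[ℝ] (Fin 3 → ℝ)) :
      (Fin 3 → ℝ) →ₗ[ℝ] (Fin 3 → ℝ))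
      = c • ((A : (Fin 3 → ℝ) →ₗ[ℝ] _) ∘ₗ ((D : (Fin 3 → ℝ) →ₗ[ℝ] _) ∘ₗ (B : (Fin 3 → ℝ) →ₗ[ℝ] _))) := by
    rfl
  rw [this, LinearMap.map_smul, smul_eq_mul]
  congr 1
  calc LinearMap.trace ℝ _ ((A : (Fin 3 → ℝ) →ₗ[ℝ] _) ∘ₗ ((D : (Fin 3 → ℝ) →ₗ[ℝ] _) ∘ₗ (B : (Fin 3 → ℝ) →ₗ[ℝ] _)))
      = LinearMap.trace ℝ _ (((D : (Fin 3 → ℝ) →ₗ[ℝ] _) ∘ₗ (B : (Fin 3 → ℝ) →ₗ[ℝ] _)) ∘ₗ (A : (Fin 3 → ℝ) →ₗ[ℝ] _)) :=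
        LinearMap.trace_comp_comm' _ _
    _ = LinearMap.trace ℝ _ ((D : (Fin 3 → ℝ) →ₗ[ℝ] _) ∘ₗ ((B : (Fin 3 → ℝ) →ₗ[ℝ] _) ∘ₗ (A : (Fin 3 → ℝ) →ₗ[ℝ] _))) := by
        rw [LinearMap.comp_assoc]
    _ = LinearMap.trace ℝ _ (D : (Fin 3 → ℝ) →ₗ[ℝ] _) := by
        have hBA : ((B : (Fin 3 → ℝ) →ₗ[ℝ] _) ∘ₗ (A : (Fin 3 → ℝ) →ₗ[ℝ] _)) = LinearMap.id := by
          simp only [A, B, LinearMap.coe_toContinuousLinearMap]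
          rw [← Matrix.mulVecLin_mul, Matrix.nonsing_inv_mul J hJ, Matrix.mulVecLin_one]
        rw [hBA, LinearMap.comp_id]
end

section
/- Define the specialised signum function sgn : ℝ → ℝ by sgn(s) = 1 for s ≥ 0 and sgn(s) = −1 for s < 0, and for t = (t₁, t₂, t₃) ∈ ℝ³ define orth(t) = (sgn(t₁)·|t₃|, sgn(t₂)·|t₃|, −sgn(t₃)·|t₁| − sgn(t₃)·|t₂|). Then for every t ∈ ℝ³ the Euclidean norms satisfy ‖t‖ ≤ ‖orth(t)‖ ≤ √2 · ‖t‖. -/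
/-- The specialised signum function: `sgn s = 1` for `s ≥ 0` and `-1` for `s < 0`. -/
noncomputable def sgn (s : ℝ) : ℝ := if 0 ≤ s then 1 else -1

/-- The algorithmic orthogonal-vector formula
`orth t = (sgn t₁ |t₃|, sgn t₂ |t₃|, − sgn t₃ |t₁| − sgn t₃ |t₂|)`. -/
noncomputable def orth (t : EuclideanSpace ℝ (Fin 3)) : EuclideanSpace ℝ (Fin 3) :=
  WithLp.toLp 2 ![sgn (t 0) * |t 2|, sgn (t 1) * |t 2|, -(sgn (t 2) * |t 0|) - sgn (t 2) * |t 1|]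

/-!
The signs in `orth t` do not change the absolute values of its entries, so
`‖orth t‖² = 2 t₃² + (|t₁| + |t₂|)²`, to be compared with `‖t‖² = t₁² + t₂² + t₃²`. Both bounds
then come from `a² + b² ≤ (a + b)² ≤ 2 (a² + b²)` for `a, b ≥ 0`.
-/

lemma abs_sgn (s : ℝ) : |sgn s| = 1 := by
  unfold sgn; split <;> norm_num

lemma abs_sgn_mul (s x : ℝ) : |sgn s * x| = |x| := by
  rw [abs_mul, abs_sgn, one_mul]

lemma EuclideanSpace.real_norm_sq_eq_fin_three (t : EuclideanSpace ℝ (Fin 3)) :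
    ‖t‖ ^ 2 = t 0 ^ 2 + t 1 ^ 2 + t 2 ^ 2 := by
  rw [EuclideanSpace.real_norm_sq_eq, Fin.sum_univ_three]

lemma norm_orth_sq (t : EuclideanSpace ℝ (Fin 3)) :
    ‖orth t‖ ^ 2 = 2 * t 2 ^ 2 + (|t 0| + |t 1|) ^ 2 := by
  have h_third : |(-(sgn (t 2) * |t 0|) - sgn (t 2) * |t 1|)| = |t 0| + |t 1| := by
    rw [sub_eq_add_neg, ← neg_add, abs_neg, ← mul_add, abs_sgn_mul, abs_of_nonneg (by positivity)]
  rw [EuclideanSpace.real_norm_sq_eq_fin_three, ← sq_abs (orth t 0), ← sq_abs (orth t 1),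
    ← sq_abs (orth t 2)]
  simp only [orth, PiLp.toLp_apply, Matrix.cons_val_zero, Matrix.cons_val_one,
    Matrix.cons_val_two, Matrix.head_cons, Matrix.tail_cons, abs_sgn_mul, abs_abs, h_third, sq_abs]
  ring

lemma norm_sq_le_norm_orth_sq (t : EuclideanSpace ℝ (Fin 3)) : ‖t‖ ^ 2 ≤ ‖orth t‖ ^ 2 := by
  have h_sq_add_sq := pow_add_pow_le (abs_nonneg (t 0)) (abs_nonneg (t 1)) two_ne_zero
  rw [sq_abs, sq_abs] at h_sq_add_sq
  rw [norm_orth_sq, EuclideanSpace.real_norm_sq_eq_fin_three]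
  linarith [sq_nonneg (t 2)]

lemma norm_orth_sq_le_two_mul_norm_sq (t : EuclideanSpace ℝ (Fin 3)) :
    ‖orth t‖ ^ 2 ≤ 2 * ‖t‖ ^ 2 := by
  have h_add_sq := add_sq_le (a := |t 0|) (b := |t 1|)
  rw [sq_abs, sq_abs] at h_add_sq
  rw [norm_orth_sq, EuclideanSpace.real_norm_sq_eq_fin_three]
  linarith

/-- The Euclidean norms satisfy `‖t‖ ≤ ‖orth t‖ ≤ √2 ‖t‖` for every `t ∈ ℝ³`. -/
theorem norm_le_norm_orth_le_sqrt_two_mul_norm (t : EuclideanSpace ℝ (Fin 3)) :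
    ‖t‖ ≤ ‖orth t‖ ∧ ‖orth t‖ ≤ Real.sqrt 2 * ‖t‖ := by
  have h_sqrt_two_mul_sq : (Real.sqrt 2 * ‖t‖) ^ 2 = 2 * ‖t‖ ^ 2 := by
    rw [mul_pow, Real.sq_sqrt zero_le_two]
  constructor
  · exact (sq_le_sq₀ (norm_nonneg _) (norm_nonneg _)).1 (norm_sq_le_norm_orth_sq t)
  · refine (sq_le_sq₀ (norm_nonneg _) (by positivity)).1 ?_
    rw [h_sqrt_two_mul_sq]
    exact norm_orth_sq_le_two_mul_norm_sq t
end
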